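/- Define q_n = t_n − 1 and r_n = t_n + 9/7 for all n ≥ 0. Then ∑_{n≥1} (9·q_{n-1} + 7·r_n)/n³ = 8·ζ(3), where ζ is the Riemann zeta function. -/
import Mathlib


open Complex

/-- The Thue-Morse sequence: binary digit sum of `n` modulo 2. -/
def tm (n : ℕ) : ℕ := (Nat.digits 2 n).sum % 2

/-- The ±1 Thue-Morse sequence `ε n = (-1)^(t n)`. -/
noncomputable def eps (n : ℕ) : ℂ := (-1) ^ tm n

lemma tm_le (n : ℕ) : tm n ≤ 1 := Nat.lt_succ_iff.mp (Nat.mod_lt _ (by norm_num))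

lemma tm_two_mul (n : ℕ) : tm (2 * n) = tm n := by
  rcases Nat.eq_zero_or_pos n with h | h
  · simp [h]
  · unfold tm
    rw [Nat.digits_def' (by norm_num : 1 < 2) (by positivity)]
    simp [Nat.mul_div_cancel_left _ (by norm_num : 0 < 2)]

lemma tm_two_mul_add_one (n : ℕ) : tm (2 * n + 1) = (tm n + 1) % 2 := by
  unfold tm
  rw [Nat.digits_def' (by norm_num : 1 < 2) (by positivity)]
  have h1 : (2 * n + 1) % 2 = 1 := by omega
  have h2 : (2 * n + 1) / 2 = n := by omega
  rw [h1, h2]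
  simp [Nat.add_mod, Nat.add_comm]

lemma eps_two_mul (n : ℕ) : eps (2 * n) = eps n := by
  unfold eps; rw [tm_two_mul]

lemma eps_two_mul_add_one (n : ℕ) : eps (2 * n + 1) = -eps n := by
  unfold eps
  rw [tm_two_mul_add_one]
  rcases Nat.le_one_iff_eq_zero_or_eq_one.mp (tm_le n) with h | h <;> rw [h] <;> norm_num

lemma tm_cast (n : ℕ) : (tm n : ℂ) = (1 - eps n) / 2 := by
  unfold eps
  rcases Nat.le_one_iff_eq_zero_or_eq_one.mp (tm_le n) with h | h <;> rw [h] <;> norm_num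

lemma norm_eps (n : ℕ) : ‖eps n‖ = 1 := by
  unfold eps
  rw [norm_pow, norm_neg, norm_one, one_pow]

lemma summable_base : Summable (fun n : ℕ => 1 / ((n : ℝ) + 1) ^ 3) := by
  have h := (summable_nat_add_iff 1).mpr
    (Real.summable_one_div_nat_pow.mpr (by norm_num : 1 < 3))
  refine h.congr fun n => ?_
  push_cast
  ring

lemma summable_aux (f : ℕ → ℂ) (h : ∀ n, ‖f n‖ ≤ 1 / ((n : ℝ) + 1) ^ 3) :
    Summable f := by
  refine Summable.of_norm (Summable.of_nonneg_of_le (fun n => norm_nonneg _) h summable_base)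

lemma norm_div_pow (a : ℂ) (m : ℕ) (ha : ‖a‖ = 1) :
    ‖a / ((m : ℂ) + 1) ^ 3‖ = 1 / ((m : ℝ) + 1) ^ 3 := by
  rw [norm_div, norm_pow, ha]
  congr 2
  have : ((m : ℂ) + 1) = ((m + 1 : ℕ) : ℂ) := by push_cast; ring
  rw [this, Complex.norm_natCast]
  push_cast; ring

theorem stmt_16 :
    ∑' n : ℕ, (9 * ((tm n : ℂ) - 1) + 7 * ((tm (n + 1) : ℂ) + 9 / 7)) / ((n : ℂ) + 1) ^ 3 =
      8 * riemannZeta 3 := by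
  set F : ℕ → ℂ := fun n => eps n / ((n : ℂ) + 1) ^ 3 with hFdef
  set G : ℕ → ℂ := fun n => eps (n + 1) / ((n : ℂ) + 1) ^ 3 with hGdef
  set C : ℕ → ℂ := fun k => eps k / (2 * (k : ℂ) + 1) ^ 3 with hCdef
  set Z : ℕ → ℂ := fun n => 1 / ((n : ℂ) + 1) ^ 3 with hZdef
  have hF : Summable F := summable_aux F fun n => le_of_eq (norm_div_pow _ _ (norm_eps n))
  have hG : Summable G := summable_aux G fun n => le_of_eq (norm_div_pow _ _ (norm_eps _))
  have hZ : Summable Z := summable_aux Z fun n => le_of_eq (norm_div_pow _ _ norm_one)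
  have hC : Summable C := by
    refine summable_aux C fun k => ?_
    have h1 : ‖C k‖ = 1 / (2 * (k : ℝ) + 1) ^ 3 := by
      rw [hCdef]
      simp only
      rw [norm_div, norm_pow, norm_eps]
      congr 2
      have : (2 * (k : ℂ) + 1) = ((2 * k + 1 : ℕ) : ℂ) := by push_cast; ring
      rw [this, Complex.norm_natCast]
      push_cast; ring
    rw [h1]
    apply one_div_le_one_div_of_le (by positivity)
    have hk : (0 : ℝ) ≤ (k : ℝ) := Nat.cast_nonneg k
    exact pow_le_pow_left₀ (by linarith) (by linarith) 3
  -- even/odd decompositions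
  have hFeven : (fun k => F (2 * k)) = C := by
    funext k
    simp only [hFdef, hCdef, eps_two_mul]
    push_cast
    ring_nf
  have hFodd : (fun k => F (2 * k + 1)) = fun k => -(1 / 8) * F k := by
    funext k
    simp only [hFdef]
    rw [eps_two_mul_add_one]
    push_cast
    rw [show (2 * (k : ℂ) + 1 + 1) ^ 3 = 8 * ((k : ℂ) + 1) ^ 3 from by ring,
      neg_mul, neg_div, div_mul_div_comm, one_mul]
  have hGeven : (fun k => G (2 * k)) = fun k => -C k := by
    funext k
    simp only [hGdef, hCdef]
    rw [eps_two_mul_add_one]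
    push_cast
    ring_nf
  have hGodd : (fun k => G (2 * k + 1)) = fun k => (1 / 8) * G k := by
    funext k
    simp only [hGdef]
    have h2 : 2 * k + 1 + 1 = 2 * (k + 1) := by ring
    rw [h2, eps_two_mul]
    push_cast
    rw [show (2 * (k : ℂ) + 1 + 1) ^ 3 = 8 * ((k : ℂ) + 1) ^ 3 from by ring,
      div_mul_div_comm, one_mul]
  have eF : (∑' k, C k) + (-(1 / 8)) * ∑' k, F k = ∑' k, F k := by
    have h := tsum_even_add_odd (f := F) (by rw [hFeven]; exact hC)
      (by rw [hFodd]; exact hF.mul_left _)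
    rw [hFeven, hFodd, tsum_mul_left] at h
    exact h
  have eG : -(∑' k, C k) + (1 / 8) * ∑' k, G k = ∑' k, G k := by
    have h := tsum_even_add_odd (f := G) (by rw [hGeven]; exact hC.neg)
      (by rw [hGodd]; exact hG.mul_left _)
    rw [hGeven, hGodd, tsum_mul_left, tsum_neg] at h
    exact h
  -- rewrite the summand
  have hsummand : (fun n : ℕ => (9 * ((tm n : ℂ) - 1) + 7 * ((tm (n + 1) : ℂ) + 9 / 7)) / ((n : ℂ) + 1) ^ 3)
      = fun n => 8 * Z n + ((-(9 / 2)) * F n + (-(7 / 2)) * G n) := by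
    funext n
    simp only [hFdef, hGdef, hZdef, tm_cast]
    ring
  rw [hsummand]
  rw [Summable.tsum_add (hZ.mul_left _) ((hF.mul_left _).add (hG.mul_left _)),
    Summable.tsum_add (hF.mul_left _) (hG.mul_left _), tsum_mul_left, tsum_mul_left, tsum_mul_left]
  have hzeta : riemannZeta 3 = ∑' n, Z n := by
    rw [zeta_eq_tsum_one_div_nat_add_one_cpow (by norm_num)]
    refine tsum_congr fun n => ?_
    rw [hZdef]
    congr 1
    rw [show (3 : ℂ) = ((3 : ℕ) : ℂ) by norm_num, Complex.cpow_natCast]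
  rw [hzeta]
  linear_combination (4 : ℂ) * eF + (4 : ℂ) * eG
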